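/- Under Assumptions SO, NA, and DDD-CPT, for every g ∈ 𝒢_trt, every t with g ≤ t ≤ T, and every g_c ∈ 𝒮 with g_c > t, the conditional group-time average treatment effect CATT_X(g,t) = E[Y_t(g) − Y_t(∞) | X, S=g, Q=1] satisfies, almost surely, CATT_X(g,t) = (E[Y_t − Y_{g−1} | X, S=g, Q=1] − E[Y_t − Y_{g−1} | X, S=g, Q=0]) − (E[Y_t − Y_{g−1} | X, S=g_c, Q=1] − E[Y_t − Y_{g−1} | X, S=g_c, Q=0]). -/

import Mathlib

open MeasureTheory ProbabilityTheory

namespace TripleDiff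

/-- A staggered triple-differences (DDD) setup: a probability space carrying an
enabling-group variable `S` with values in a finite set `𝒮 ⊆ {2,…,T} ∪ {∞}`
(`∞` is coded as `⊤ : ℕ∞`), an eligibility indicator `Q ∈ {0,1}`, covariates
`X ∈ ℝ^d`, and integrable potential outcomes `Y_t(g)`, with every cell
`{S = g, Q = q}` having positive probability. -/
structure Setup (Ω : Type*) [MeasurableSpace Ω] (d : ℕ) where
  /-- the underlying probability measure -/
  μ : Measure Ω
  isProb : IsProbabilityMeasure μ
  /-- the number of time periods -/
  T : ℕ
  hT : 2 ≤ T
  /-- the (finite) support of the enabling variable -/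
  𝒮 : Finset ℕ∞
  h𝒮 : ∀ g ∈ 𝒮, g ≠ ⊤ → ∃ n : ℕ, 2 ≤ n ∧ n ≤ T ∧ g = (n : ℕ∞)
  htop : (⊤ : ℕ∞) ∈ 𝒮
  /-- enabling group: first period at which treatment is enabled -/
  S : Ω → ℕ∞
  hS : Measurable S
  hSmem : ∀ ω, S ω ∈ 𝒮
  /-- eligibility indicator -/
  Q : Ω → ℕ
  hQ : Measurable Q
  hQval : ∀ ω, Q ω ≤ 1
  /-- covariates -/
  X : Ω → Fin d → ℝ
  hX : Measurable X
  /-- potential outcomes `Y_t(g)` -/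
  Ypo : ℕ∞ → ℕ → Ω → ℝ
  hYpo : ∀ g ∈ 𝒮, ∀ t : ℕ, 1 ≤ t → t ≤ T → Integrable (Ypo g t) μ
  hcells : ∀ g ∈ 𝒮, ∀ q ≤ 1, 0 < μ {ω | S ω = g ∧ Q ω = q}

namespace Setup

variable {Ω : Type*} [MeasurableSpace Ω] {d : ℕ} (E : Setup Ω d)

/-- the cell `{S = g, Q = q}` -/
def cell (g : ℕ∞) (q : ℕ) : Set Ω := {ω | E.S ω = g ∧ E.Q ω = q}

/-- first treatment period: `G = S` if `Q = 1` and `G = ∞` if `Q = 0` -/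
def G (ω : Ω) : ℕ∞ := if E.Q ω = 1 then E.S ω else ⊤

/-- observed outcome `Y_t = Σ_g 1{G = g} Y_t(g)` -/
def Yobs (t : ℕ) (ω : Ω) : ℝ := E.Ypo (E.G ω) t ω

/-- the σ-algebra generated by the covariates `X` -/
def mX : MeasurableSpace Ω := MeasurableSpace.comap E.X inferInstance

/-- conditional cell probability `P(S = g, Q = q | X)` given `σ(X)` -/
noncomputable def pX (g : ℕ∞) (q : ℕ) : Ω → ℝ :=
  (E.μ)[(E.cell g q).indicator (fun _ => (1 : ℝ)) | E.mX]

/-- group-time average treatment effect `ATT(g,t) = E[Y_t(g) − Y_t(∞) | S = g, Q = 1]` -/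
noncomputable def ATT (g t : ℕ) : ℝ :=
  ∫ ω, (E.Ypo (g : ℕ∞) t ω - E.Ypo ⊤ t ω) ∂((E.μ)[|E.cell (g : ℕ∞) 1])

/-- outcome-regression nuisance `m^{g',q'}(X) = E[Y_t − Y_{g−1} | S = g', Q = q', X]`,
for the fixed pair `(g,t)` -/
noncomputable def mReg (g t : ℕ) (g' : ℕ∞) (q' : ℕ) : Ω → ℝ :=
  ((E.μ)[|E.cell g' q'])[fun ω => E.Yobs t ω - E.Yobs (g - 1) ω | E.mX]

/-- treated weight `w_trt = 1{S = g, Q = 1} / E[1{S = g, Q = 1}]` -/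
noncomputable def wTrt (g : ℕ) : Ω → ℝ := fun ω =>
  (E.cell (g : ℕ∞) 1).indicator (fun _ => (1 : ℝ)) ω / (E.μ (E.cell (g : ℕ∞) 1)).toReal

/-- unnormalized comparison (odds) weight `1{S = g', Q = q'}·p^{g,1}(X)/p^{g',q'}(X)` -/
noncomputable def oddsW (g : ℕ) (g' : ℕ∞) (q' : ℕ) : Ω → ℝ := fun ω =>
  (E.cell g' q').indicator (fun _ => (1 : ℝ)) ω * E.pX (g : ℕ∞) 1 ω / E.pX g' q' ω

/-- normalized comparison weight `w_{g',q'}` -/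
noncomputable def wComp (g : ℕ) (g' : ℕ∞) (q' : ℕ) : Ω → ℝ := fun ω =>
  E.oddsW g g' q' ω / ∫ ω', E.oddsW g g' q' ω' ∂E.μ

/-- doubly robust DDD estimand `ATT_dr,g_c(g,t)` with comparison group `g_c` -/
noncomputable def ATTdr (g t : ℕ) (gc : ℕ∞) : ℝ :=
  (∫ ω, (E.wTrt g ω - E.wComp g (g : ℕ∞) 0 ω) *
      (E.Yobs t ω - E.Yobs (g - 1) ω - E.mReg g t (g : ℕ∞) 0 ω) ∂E.μ)
  + (∫ ω, (E.wTrt g ω - E.wComp g gc 1 ω) *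
      (E.Yobs t ω - E.Yobs (g - 1) ω - E.mReg g t gc 1 ω) ∂E.μ)
  - (∫ ω, (E.wTrt g ω - E.wComp g gc 0 ω) *
      (E.Yobs t ω - E.Yobs (g - 1) ω - E.mReg g t gc 0 ω) ∂E.μ)

/-- Assumption SO (strong overlap): there is `ε > 0` with
`P(S = g, Q = q | X) > ε` a.s. for every cell. -/
def StrongOverlap : Prop :=
  ∃ ε > (0 : ℝ), ∀ g ∈ E.𝒮, ∀ q ≤ 1, ∀ᵐ ω ∂E.μ, ε < E.pX g q ω

/-- Assumption NA (no anticipation): for every treated group `g` and every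
pre-treatment period `t < g`,
`E[Y_t(g) | S = g, Q = 1, X] = E[Y_t(∞) | S = g, Q = 1, X]` a.s. -/
def NoAnticipation : Prop :=
  ∀ g : ℕ, (g : ℕ∞) ∈ E.𝒮 → ∀ t : ℕ, 1 ≤ t → t < g →
    ((E.μ)[|E.cell (g : ℕ∞) 1])[E.Ypo (g : ℕ∞) t | E.mX]
      =ᵐ[E.μ] ((E.μ)[|E.cell (g : ℕ∞) 1])[E.Ypo ⊤ t | E.mX]

/-- Assumption DDD-CPT (conditional DDD parallel trends): for each treated group
`g`, each `g' ∈ 𝒮` and period `t` with `t ≥ g` and `g' > max{g,t}`, a.s.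
`E[ΔY_t(∞)|S=g,Q=1,X] − E[ΔY_t(∞)|S=g,Q=0,X]
  = E[ΔY_t(∞)|S=g',Q=1,X] − E[ΔY_t(∞)|S=g',Q=0,X]`. -/
def ParallelTrends : Prop :=
  ∀ g : ℕ, (g : ℕ∞) ∈ E.𝒮 → ∀ g' ∈ E.𝒮, ∀ t : ℕ, g ≤ t → t ≤ E.T →
    max (g : ℕ∞) (t : ℕ∞) < g' →
    (fun ω =>
        (((E.μ)[|E.cell (g : ℕ∞) 1])[fun ω' => E.Ypo ⊤ t ω' - E.Ypo ⊤ (t - 1) ω' | E.mX]) ω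
          - (((E.μ)[|E.cell (g : ℕ∞) 0])[fun ω' => E.Ypo ⊤ t ω' - E.Ypo ⊤ (t - 1) ω' | E.mX]) ω)
      =ᵐ[E.μ]
    (fun ω =>
        (((E.μ)[|E.cell g' 1])[fun ω' => E.Ypo ⊤ t ω' - E.Ypo ⊤ (t - 1) ω' | E.mX]) ω
          - (((E.μ)[|E.cell g' 0])[fun ω' => E.Ypo ⊤ t ω' - E.Ypo ⊤ (t - 1) ω' | E.mX]) ω)

end Setup

end TripleDiff

open TripleDiff

namespace TripleDiff
namespace Setup

variable {Ω : Type*} [MeasurableSpace Ω] {d : ℕ} (E : Setup Ω d)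

lemma cell_meas (g' : ℕ∞) (q' : ℕ) : MeasurableSet (E.cell g' q') :=
  (E.hS (measurableSet_singleton g')).inter (E.hQ (measurableSet_singleton q'))

lemma cell_ne_zero {g' : ℕ∞} (hg' : g' ∈ E.𝒮) {q' : ℕ} (hq' : q' ≤ 1) :
    E.μ (E.cell g' q') ≠ 0 := (E.hcells g' hg' q' hq').ne'

lemma integrable_cond {f : Ω → ℝ} (hf : Integrable f E.μ) {A : Set Ω} (hA : E.μ A ≠ 0) :
    Integrable f (E.μ[|A]) := by
  rw [ProbabilityTheory.cond]
  exact hf.restrict.smul_measure (ENNReal.inv_ne_top.mpr hA)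

lemma ae_cond_of_ae {p : Ω → Prop} {A : Set Ω} (h : ∀ᵐ ω ∂E.μ, p ω) :
    ∀ᵐ ω ∂(E.μ[|A]), p ω := by
  rw [ProbabilityTheory.cond]
  exact Measure.ae_smul_measure (ae_restrict_of_ae h) _

lemma ae_cond_mem {A : Set Ω} (hA : MeasurableSet A) : ∀ᵐ ω ∂(E.μ[|A]), ω ∈ A := by
  rw [ProbabilityTheory.cond]
  exact Measure.ae_smul_measure (ae_restrict_mem hA) _

/-- Under strong overlap, a `σ(X)`-measurable a.e. (w.r.t. the conditional
measure of a cell) equality holds a.e. w.r.t. `μ`. -/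
lemma transfer (hSO : E.StrongOverlap) {g' : ℕ∞} (hg' : g' ∈ E.𝒮) {q' : ℕ} (hq' : q' ≤ 1)
    {f h : Ω → ℝ} (hf : StronglyMeasurable[E.mX] f) (hh : StronglyMeasurable[E.mX] h)
    (hfh : f =ᵐ[E.μ[|E.cell g' q']] h) : f =ᵐ[E.μ] h := by
  haveI := E.isProb
  obtain ⟨ε, hε, hSO'⟩ := hSO
  have hpX := hSO' g' hg' q' hq'
  have hm : E.mX ≤ _ := E.hX.comap_le
  set A := E.cell g' q' with hAdef
  have hAm : MeasurableSet A := E.cell_meas g' q'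
  have hA0 : E.μ A ≠ 0 := E.cell_ne_zero hg' hq'
  set B := {ω | f ω = h ω}ᶜ with hBdef
  have hBm : MeasurableSet[E.mX] B := (measurableSet_eq_fun hf.measurable hh.measurable).compl
  have hres : E.μ.restrict A B = 0 := by
    have hr : f =ᵐ[E.μ.restrict A] h := by
      rw [ProbabilityTheory.cond] at hfh
      have h0 := ae_iff.mp hfh
      rw [Measure.smul_apply, smul_eq_mul, mul_eq_zero] at h0
      exact ae_iff.mpr (h0.resolve_left (ENNReal.inv_ne_zero.mpr (measure_ne_top _ _)))
    exact ae_iff.mp hr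
  have hBA : E.μ (B ∩ A) = 0 := by
    rwa [Measure.restrict_apply (hm _ hBm)] at hres
  have hind : Integrable (A.indicator (fun _ => (1 : ℝ))) E.μ := (integrable_const 1).indicator hAm
  have hzero : ∫ ω in B, E.pX g' q' ω ∂E.μ = 0 := by
    have h1 : ∫ ω in B, E.pX g' q' ω ∂E.μ = ∫ ω in B, A.indicator (fun _ => (1 : ℝ)) ω ∂E.μ :=
      setIntegral_condExp hm hind hBm
    rw [h1, setIntegral_indicator hAm, setIntegral_const, measureReal_def, hBA]
    simp
  have hpXint : Integrable (E.pX g' q') E.μ := integrable_condExp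
  have hmono : (E.μ B).toReal • ε ≤ ∫ ω in B, E.pX g' q' ω ∂E.μ := by
    rw [← measureReal_def, ← setIntegral_const]
    exact integral_mono_ae (integrable_const ε).restrict hpXint.restrict
      (ae_restrict_of_ae (hpX.mono fun ω hω => hω.le))
  rw [hzero, smul_eq_mul] at hmono
  have hB0 : E.μ B = 0 := by
    by_contra hne
    have hpos : 0 < (E.μ B).toReal := ENNReal.toReal_pos hne (measure_ne_top _ _)
    nlinarith
  rw [Filter.EventuallyEq, ae_iff]
  exact hB0

/-- Evaluation of the outcome-regression nuisance on a cell where `G` is constant. -/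
lemma mReg_eval (hSO : E.StrongOverlap) {g t : ℕ} (ht1 : 1 ≤ t) (htT : t ≤ E.T)
    (hg1 : 1 ≤ g - 1) (hg1T : g - 1 ≤ E.T)
    {g' : ℕ∞} (hg' : g' ∈ E.𝒮) {q' : ℕ} (hq' : q' ≤ 1)
    {h : ℕ∞} (hh : h ∈ E.𝒮) (hGh : ∀ ω ∈ E.cell g' q', E.G ω = h) :
    E.mReg g t g' q' =ᵐ[E.μ]
      ((E.μ[|E.cell g' q'])[E.Ypo h t | E.mX])
        - ((E.μ[|E.cell g' q'])[E.Ypo h (g - 1) | E.mX]) := by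
  haveI := E.isProb
  have hA0 : E.μ (E.cell g' q') ≠ 0 := E.cell_ne_zero hg' hq'
  have hit : Integrable (E.Ypo h t) (E.μ[|E.cell g' q']) :=
    E.integrable_cond (E.hYpo h hh t ht1 htT) hA0
  have hig : Integrable (E.Ypo h (g - 1)) (E.μ[|E.cell g' q']) :=
    E.integrable_cond (E.hYpo h hh (g - 1) hg1 hg1T) hA0
  have hcongr : (fun ω => E.Yobs t ω - E.Yobs (g - 1) ω) =ᵐ[E.μ[|E.cell g' q']]
      (fun ω => E.Ypo h t ω - E.Ypo h (g - 1) ω) := by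
    refine (E.ae_cond_mem (E.cell_meas g' q')).mono fun ω hω => ?_
    simp [Setup.Yobs, hGh ω hω]
  have step : E.mReg g t g' q' =ᵐ[E.μ[|E.cell g' q']]
      ((E.μ[|E.cell g' q'])[E.Ypo h t | E.mX])
        - ((E.μ[|E.cell g' q'])[E.Ypo h (g - 1) | E.mX]) :=
    (condExp_congr_ae hcongr).trans (condExp_sub hit hig E.mX)
  exact E.transfer hSO hg' hq' stronglyMeasurable_condExp
    (stronglyMeasurable_condExp.sub stronglyMeasurable_condExp) step

lemma tele (f : ℕ → ℝ) {g t : ℕ} (h : g ≤ t) :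
    ∑ s ∈ Finset.Icc g t, (f s - f (s - 1)) = f t - f (g - 1) := by
  induction t, h using Nat.le_induction with
  | base => simp
  | succ t ht ih =>
      rw [Finset.sum_Icc_succ_top (le_trans ht (Nat.le_succ t)), ih]
      simp

/-- Telescoping of the never-treated trend on a cell. -/
lemma tele_eval (hSO : E.StrongOverlap) {g t : ℕ} (hg2 : 2 ≤ g) (hgt : g ≤ t) (htT : t ≤ E.T)
    {g' : ℕ∞} (hg' : g' ∈ E.𝒮) {q' : ℕ} (hq' : q' ≤ 1) :
    (fun ω => ((E.μ[|E.cell g' q'])[E.Ypo ⊤ t | E.mX]) ω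
        - ((E.μ[|E.cell g' q'])[E.Ypo ⊤ (g - 1) | E.mX]) ω)
      =ᵐ[E.μ]
    (fun ω => ∑ s ∈ Finset.Icc g t,
      ((E.μ[|E.cell g' q'])[fun ω' => E.Ypo ⊤ s ω' - E.Ypo ⊤ (s - 1) ω' | E.mX]) ω) := by
  haveI := E.isProb
  have hA0 : E.μ (E.cell g' q') ≠ 0 := E.cell_ne_zero hg' hq'
  have hint : ∀ s, 1 ≤ s → s ≤ E.T → Integrable (E.Ypo ⊤ s) (E.μ[|E.cell g' q']) :=
    fun s h1 h2 => E.integrable_cond (E.hYpo ⊤ E.htop s h1 h2) hA0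
  have ht1 : 1 ≤ t := le_trans (le_trans one_le_two hg2) hgt
  have hg1 : 1 ≤ g - 1 := by omega
  have hg1T : g - 1 ≤ E.T := by omega
  have key : (fun ω => E.Ypo ⊤ t ω - E.Ypo ⊤ (g - 1) ω)
      = fun ω => ∑ s ∈ Finset.Icc g t, (E.Ypo ⊤ s ω - E.Ypo ⊤ (s - 1) ω) := by
    funext ω
    rw [tele (fun s => E.Ypo ⊤ s ω) hgt]
  have h1 : (fun ω => ((E.μ[|E.cell g' q'])[E.Ypo ⊤ t | E.mX]) ω
        - ((E.μ[|E.cell g' q'])[E.Ypo ⊤ (g - 1) | E.mX]) ω)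
      =ᵐ[E.μ[|E.cell g' q']]
      ((E.μ[|E.cell g' q'])[fun ω => E.Ypo ⊤ t ω - E.Ypo ⊤ (g - 1) ω | E.mX]) :=
    (condExp_sub (hint t ht1 htT) (hint (g - 1) hg1 hg1T) E.mX).symm
  have h2 : ((E.μ[|E.cell g' q'])[fun ω => E.Ypo ⊤ t ω - E.Ypo ⊤ (g - 1) ω | E.mX])
      =ᵐ[E.μ[|E.cell g' q']]
      (fun ω => ∑ s ∈ Finset.Icc g t,
        ((E.μ[|E.cell g' q'])[fun ω' => E.Ypo ⊤ s ω' - E.Ypo ⊤ (s - 1) ω' | E.mX]) ω) := by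
    rw [key]
    have hints : ∀ s ∈ Finset.Icc g t,
        Integrable (fun ω' => E.Ypo ⊤ s ω' - E.Ypo ⊤ (s - 1) ω') (E.μ[|E.cell g' q']) := by
      intro s hs
      rw [Finset.mem_Icc] at hs
      exact (hint s (by omega) (by omega)).sub (hint (s - 1) (by omega) (by omega))
    have := condExp_finsetSum (m := E.mX) (μ := E.μ[|E.cell g' q'])
      (s := Finset.Icc g t) (f := fun s ω' => E.Ypo ⊤ s ω' - E.Ypo ⊤ (s - 1) ω') hints
    refine (Filter.EventuallyEq.trans ?_ this).trans ?_
    · apply Filter.EventuallyEq.of_eq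
      have heq : (fun ω => ∑ s ∈ Finset.Icc g t, (E.Ypo ⊤ s ω - E.Ypo ⊤ (s - 1) ω))
          = ∑ s ∈ Finset.Icc g t, fun ω' => E.Ypo ⊤ s ω' - E.Ypo ⊤ (s - 1) ω' := by
        funext ω
        simp only [Finset.sum_apply]
      rw [heq]
    · apply Filter.EventuallyEq.of_eq
      funext ω
      simp only [Finset.sum_apply]
  exact E.transfer hSO hg' hq'
    (stronglyMeasurable_condExp.sub stronglyMeasurable_condExp)
    (Finset.stronglyMeasurable_fun_sum _ fun s _ => stronglyMeasurable_condExp)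
    (h1.trans h2)

end Setup
end TripleDiff

/-- **Conditional ATT identification (Lemma A.1).**
Under Assumptions SO, NA, and DDD-CPT, for every `g ∈ 𝒢_trt`, every `t` with
`g ≤ t ≤ T`, and every `g_c ∈ 𝒮` with `g_c > t`, the conditional group-time ATT
`CATT_X(g,t) = E[Y_t(g) − Y_t(∞) | X, S = g, Q = 1]` satisfies, almost surely,
`CATT_X(g,t) = (E[Y_t − Y_{g−1} | X, S=g, Q=1] − E[Y_t − Y_{g−1} | X, S=g, Q=0])
  − (E[Y_t − Y_{g−1} | X, S=g_c, Q=1] − E[Y_t − Y_{g−1} | X, S=g_c, Q=0])`. -/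
theorem catt_identification {Ω : Type*} [MeasurableSpace Ω] {d : ℕ} (E : Setup Ω d)
    (hSO : E.StrongOverlap) (hNA : E.NoAnticipation) (hPT : E.ParallelTrends)
    (g : ℕ) (hg : (g : ℕ∞) ∈ E.𝒮) (t : ℕ) (hgt : g ≤ t) (htT : t ≤ E.T)
    (gc : ℕ∞) (hgc : gc ∈ E.𝒮) (hgct : (t : ℕ∞) < gc) :
    (((E.μ)[|E.cell (g : ℕ∞) 1])[fun ω => E.Ypo (g : ℕ∞) t ω - E.Ypo ⊤ t ω | E.mX])
      =ᵐ[E.μ]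
    fun ω => (E.mReg g t (g : ℕ∞) 1 ω - E.mReg g t (g : ℕ∞) 0 ω)
      - (E.mReg g t gc 1 ω - E.mReg g t gc 0 ω) := by
  haveI := E.isProb
  obtain ⟨n, hn2, hnT, hgn⟩ := E.h𝒮 (g : ℕ∞) hg (by simp)
  have hgeq : g = n := by exact_mod_cast hgn
  subst hgeq
  have ht1 : 1 ≤ t := by omega
  have hg1 : 1 ≤ g - 1 := by omega
  have hg1T : g - 1 ≤ E.T := by omega
  have hG1 : ∀ (a : ℕ∞), ∀ ω ∈ E.cell a 1, E.G ω = a := by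
    intro a ω hω
    simp only [Setup.G, hω.2, if_true]
    exact hω.1
  have hG0 : ∀ (a : ℕ∞), ∀ ω ∈ E.cell a 0, E.G ω = ⊤ := by
    intro a ω hω
    simp [Setup.G, hω.2]
  -- evaluation of the four nuisances
  have hE2 : E.mReg g t (g : ℕ∞) 1 =ᵐ[E.μ]
      ((E.μ[|E.cell (g : ℕ∞) 1])[E.Ypo (g : ℕ∞) t | E.mX])
        - ((E.μ[|E.cell (g : ℕ∞) 1])[E.Ypo (g : ℕ∞) (g - 1) | E.mX]) :=
    E.mReg_eval hSO ht1 htT hg1 hg1T hg le_rfl hg (hG1 _)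
  have hNAg : ((E.μ[|E.cell (g : ℕ∞) 1])[E.Ypo (g : ℕ∞) (g - 1) | E.mX]) =ᵐ[E.μ]
      ((E.μ[|E.cell (g : ℕ∞) 1])[E.Ypo ⊤ (g - 1) | E.mX]) :=
    hNA g hg (g - 1) hg1 (by omega)
  have hE3 : E.mReg g t (g : ℕ∞) 0 =ᵐ[E.μ]
      ((E.μ[|E.cell (g : ℕ∞) 0])[E.Ypo ⊤ t | E.mX])
        - ((E.μ[|E.cell (g : ℕ∞) 0])[E.Ypo ⊤ (g - 1) | E.mX]) :=
    E.mReg_eval hSO ht1 htT hg1 hg1T hg (Nat.zero_le 1) E.htop (hG0 _)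
  have hE5 : E.mReg g t gc 0 =ᵐ[E.μ]
      ((E.μ[|E.cell gc 0])[E.Ypo ⊤ t | E.mX])
        - ((E.μ[|E.cell gc 0])[E.Ypo ⊤ (g - 1) | E.mX]) :=
    E.mReg_eval hSO ht1 htT hg1 hg1T hgc (Nat.zero_le 1) E.htop (hG0 _)
  have hE4 : E.mReg g t gc 1 =ᵐ[E.μ]
      fun ω => ((E.μ[|E.cell gc 1])[E.Ypo ⊤ t | E.mX]) ω
        - ((E.μ[|E.cell gc 1])[E.Ypo ⊤ (g - 1) | E.mX]) ω := by
    by_cases htop : gc = ⊤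
    · subst htop
      have := E.mReg_eval hSO ht1 htT hg1 hg1T hgc le_rfl E.htop (hG1 _)
      exact this.trans (Filter.EventuallyEq.of_eq rfl)
    · obtain ⟨nc, hnc2, hncT, hgcn⟩ := E.h𝒮 gc hgc htop
      subst hgcn
      have htnc : t < nc := by exact_mod_cast hgct
      have heval := E.mReg_eval hSO ht1 htT hg1 hg1T hgc le_rfl hgc (hG1 _)
      have hNAt := hNA nc hgc t ht1 htnc
      have hNAg1 := hNA nc hgc (g - 1) hg1 (by omega)
      filter_upwards [heval, hNAt, hNAg1] with ω h1 h2 h3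
      rw [h1, Pi.sub_apply, h2, h3]
  -- CATT splits
  have hE1 : (((E.μ)[|E.cell (g : ℕ∞) 1])[fun ω => E.Ypo (g : ℕ∞) t ω - E.Ypo ⊤ t ω | E.mX])
      =ᵐ[E.μ]
      ((E.μ[|E.cell (g : ℕ∞) 1])[E.Ypo (g : ℕ∞) t | E.mX])
        - ((E.μ[|E.cell (g : ℕ∞) 1])[E.Ypo ⊤ t | E.mX]) := by
    have hA0 := E.cell_ne_zero hg (le_refl 1)
    exact E.transfer hSO hg le_rfl stronglyMeasurable_condExp
      (stronglyMeasurable_condExp.sub stronglyMeasurable_condExp)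
      (condExp_sub (E.integrable_cond (E.hYpo _ hg t ht1 htT) hA0)
        (E.integrable_cond (E.hYpo _ E.htop t ht1 htT) hA0) E.mX)
  -- telescoping on the four cells
  have hT1 := E.tele_eval hSO hn2 hgt htT hg le_rfl
  have hT2 := E.tele_eval hSO hn2 hgt htT hg (Nat.zero_le 1)
  have hT3 := E.tele_eval hSO hn2 hgt htT hgc le_rfl
  have hT4 := E.tele_eval hSO hn2 hgt htT hgc (Nat.zero_le 1)
  -- parallel trends, summed
  have hPTs : ∀ᵐ ω ∂E.μ, ∀ s, s ∈ Finset.Icc g t →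
      ((E.μ[|E.cell (g : ℕ∞) 1])[fun ω' => E.Ypo ⊤ s ω' - E.Ypo ⊤ (s - 1) ω' | E.mX]) ω
          - ((E.μ[|E.cell (g : ℕ∞) 0])[fun ω' => E.Ypo ⊤ s ω' - E.Ypo ⊤ (s - 1) ω' | E.mX]) ω
        = ((E.μ[|E.cell gc 1])[fun ω' => E.Ypo ⊤ s ω' - E.Ypo ⊤ (s - 1) ω' | E.mX]) ω
          - ((E.μ[|E.cell gc 0])[fun ω' => E.Ypo ⊤ s ω' - E.Ypo ⊤ (s - 1) ω' | E.mX]) ω := by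
    rw [MeasureTheory.ae_all_iff]
    intro s
    by_cases hs : s ∈ Finset.Icc g t
    · rw [Finset.mem_Icc] at hs
      have hmax : max (g : ℕ∞) (s : ℕ∞) < gc := by
        refine max_lt (lt_of_le_of_lt ?_ hgct) (lt_of_le_of_lt ?_ hgct)
        · exact_mod_cast hgt
        · exact_mod_cast hs.2
      have := hPT g hg gc hgc s hs.1 (le_trans hs.2 htT) hmax
      exact this.mono fun ω h _ => h
    · exact Filter.Eventually.of_forall fun ω hs' => absurd hs' hs
  filter_upwards [hE1, hE2, hNAg, hE3, hE4, hE5, hT1, hT2, hT3, hT4, hPTs]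
    with ω e1 e2 ena e3 e4 e5 t1 t2 t3 t4 pts
  simp only [Pi.sub_apply] at e1 e2 e3 e5
  have hsum : ∑ s ∈ Finset.Icc g t,
        (((E.μ[|E.cell (g : ℕ∞) 1])[fun ω' => E.Ypo ⊤ s ω' - E.Ypo ⊤ (s - 1) ω' | E.mX]) ω
          - ((E.μ[|E.cell (g : ℕ∞) 0])[fun ω' => E.Ypo ⊤ s ω' - E.Ypo ⊤ (s - 1) ω' | E.mX]) ω)
      = ∑ s ∈ Finset.Icc g t,
        (((E.μ[|E.cell gc 1])[fun ω' => E.Ypo ⊤ s ω' - E.Ypo ⊤ (s - 1) ω' | E.mX]) ω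
          - ((E.μ[|E.cell gc 0])[fun ω' => E.Ypo ⊤ s ω' - E.Ypo ⊤ (s - 1) ω' | E.mX]) ω) :=
    Finset.sum_congr rfl fun s hs => pts s hs
  rw [Finset.sum_sub_distrib, Finset.sum_sub_distrib] at hsum
  rw [← t1, ← t2, ← t3, ← t4] at hsum
  rw [e1, e2, e3, e4, e5, ena]
  linarith [hsum]
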